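/- arXiv:1409.4864 — 2 statements merged into one kernel-verified Lean document; each statement's English description precedes it below -/
import Mathlib

section
/- Let 0 < l, m < d with l + m > d. Then there exists a constant C such that for every nonzero k ∈ ℤ^d, the sum over all pairs (k₁, k₂) of nonzero lattice points with k₁ + k₂ = k of 1/(|k₁|^l |k₂|^m) is bounded by C / |k|^(l+m-d). -/
/-!
Since `|k₁| + |k₂| ≥ |k|`, the larger of `|k₁|`, `|k₂|` is at least `|k|/2`, so each term is at most
`|k₁|^{-l} max(|k₁|, |k|/2)^{-m} + |k₂|^{-m} max(|k₂|, |k|/2)^{-l}`. Summing over `k₁` leaves two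
one-variable sums `∑_{k ≠ 0} |k|^{-l} max(|k|, R)^{-m}` with `R = |k|/2`. Inside the ball of radius
`R` this is `R^{-m} ∑ |k|^{-l}`, outside it is `∑ |k|^{-(l+m)}`; cutting both ranges into dyadic
shells `ρ ≤ |k| ≤ 2ρ`, each holding `O(ρ^d)` lattice points, gives geometric series (convergent
because `l < d < l + m`) summing to `O(R^{d-l-m})`.
-/

open scoped ENNReal NNReal

noncomputable section

/-- Euclidean norm of a lattice point in `ℤ^d`. -/
def znormd (d : ℕ) (k : Fin d → ℤ) : ℝ := Real.sqrt (∑ i, ((k i : ℝ))^2)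

section

variable {d : ℕ}

lemma znormd_eq_norm (k : Fin d → ℤ) :
    znormd d k = ‖(WithLp.toLp 2 (fun i => (k i : ℝ)) : EuclideanSpace ℝ (Fin d))‖ := by
  simp [znormd, EuclideanSpace.norm_eq]

lemma znormd_zero : znormd d 0 = 0 := by
  simp [znormd]

lemma znormd_add_le (a b : Fin d → ℤ) : znormd d (a + b) ≤ znormd d a + znormd d b := by
  simp only [znormd_eq_norm, Pi.add_apply, Int.cast_add]
  exact norm_add_le (WithLp.toLp 2 (fun i => (a i : ℝ))) (WithLp.toLp 2 (fun i => (b i : ℝ)))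

lemma abs_apply_le_znormd (k : Fin d → ℤ) (i : Fin d) : |(k i : ℝ)| ≤ znormd d k := by
  simpa [znormd_eq_norm] using PiLp.norm_apply_le (WithLp.toLp 2 (fun i => (k i : ℝ))) i

lemma one_le_znormd {k : Fin d → ℤ} (hk : k ≠ 0) : 1 ≤ znormd d k := by
  obtain ⟨i, hi⟩ := Function.ne_iff.mp hk
  calc (1 : ℝ) ≤ |(k i : ℝ)| := by exact_mod_cast Int.one_le_abs hi
    _ ≤ znormd d k := abs_apply_le_znormd k i

lemma znormd_pos {k : Fin d → ℤ} (hk : k ≠ 0) : 0 < znormd d k :=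
  one_pos.trans_le (one_le_znormd hk)

def latticeCube (d : ℕ) (N : ℤ) : Finset (Fin d → ℤ) := Finset.Icc (fun _ => -N) (fun _ => N)

lemma mem_latticeCube_floor {R : ℝ} {k : Fin d → ℤ} (hk : znormd d k ≤ R) :
    k ∈ latticeCube d ⌊R⌋ := by
  have hcoord (i : Fin d) : |k i| ≤ ⌊R⌋ :=
    Int.le_floor.mpr (by exact_mod_cast (abs_apply_le_znormd k i).trans hk)
  simp only [latticeCube, Finset.mem_Icc]
  exact ⟨fun i => (abs_le.mp (hcoord i)).1, fun i => (abs_le.mp (hcoord i)).2⟩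

lemma card_latticeCube_floor_le {R : ℝ} (hR : 1 ≤ R) :
    ((latticeCube d ⌊R⌋).card : ℝ) ≤ (3 * R) ^ d := by
  have hfloor : (0 : ℤ) ≤ ⌊R⌋ := Int.floor_nonneg.mpr (by linarith)
  have hcard : ((latticeCube d ⌊R⌋).card : ℝ) = (2 * ⌊R⌋ + 1 : ℝ) ^ d := by
    rw [latticeCube, Pi.card_Icc]
    simp only [Int.card_Icc, Finset.prod_const, Finset.card_univ, Fintype.card_fin, Nat.cast_pow]
    congr 1
    rw [show ⌊R⌋ + 1 - -⌊R⌋ = 2 * ⌊R⌋ + 1 by ring, ← Int.cast_natCast,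
      Int.toNat_of_nonneg (by omega)]
    push_cast; ring
  rw [hcard]
  gcongr
  linarith [Int.floor_le R]

def latticeShell (d : ℕ) (ρ : ℝ) : Set (Fin d → ℤ) :=
  {k | ρ ≤ znormd d k ∧ znormd d k ≤ 2 * ρ}

lemma tsum_indicator_le_card_mul {S : Set (Fin d → ℤ)} {T : Finset (Fin d → ℤ)}
    (hST : S ⊆ T) {f : (Fin d → ℤ) → ℝ≥0∞} {c : ℝ≥0∞} (hf : ∀ k ∈ S, f k ≤ c) :
    ∑' k, S.indicator f k ≤ T.card * c := by
  calc ∑' k, S.indicator f k ≤ ∑' k, (T : Set (Fin d → ℤ)).indicator (fun _ => c) k :=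
        ENNReal.tsum_le_tsum <| Set.indicator_le fun k hk => by
          rw [Set.indicator_of_mem (hST hk)]; exact hf k hk
    _ = T.card * c := by
        rw [← _root_.tsum_subtype]
        exact (Finset.tsum_subtype T fun _ => c).trans (by simp)

lemma tsum_indicator_latticeShell_le {s ρ : ℝ} (hs : 0 ≤ s) (hρ : 0 < ρ) :
    ∑' k, (latticeShell d ρ).indicator (fun k => ENNReal.ofReal (znormd d k ^ (-s))) k ≤
      ENNReal.ofReal (6 ^ d * ρ ^ ((d : ℝ) - s)) := by
  by_cases h2ρ : 1 ≤ 2 * ρ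
  · have hbound : ∀ k ∈ latticeShell d ρ,
        ENNReal.ofReal (znormd d k ^ (-s)) ≤ ENNReal.ofReal (ρ ^ (-s)) := fun k hk =>
      ENNReal.ofReal_le_ofReal (Real.rpow_le_rpow_of_nonpos hρ hk.1 (by linarith))
    calc _ ≤ (latticeCube d ⌊2 * ρ⌋).card * ENNReal.ofReal (ρ ^ (-s)) :=
          tsum_indicator_le_card_mul (fun k hk => mem_latticeCube_floor hk.2) hbound
      _ ≤ ENNReal.ofReal ((3 * (2 * ρ)) ^ d) * ENNReal.ofReal (ρ ^ (-s)) := by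
          gcongr
          rw [← ENNReal.ofReal_natCast]
          exact ENNReal.ofReal_le_ofReal (card_latticeCube_floor_le h2ρ)
      _ = ENNReal.ofReal (6 ^ d * ρ ^ ((d : ℝ) - s)) := by
          rw [← ENNReal.ofReal_mul (by positivity), Real.rpow_sub hρ, Real.rpow_natCast,
            Real.rpow_neg hρ.le]
          congr 1
          rw [show 3 * (2 * ρ) = 6 * ρ by ring, mul_pow, div_eq_mul_inv, mul_assoc]
  · have hempty : latticeShell d ρ = ∅ := by
      refine Set.eq_empty_of_forall_notMem fun k ⟨hρk, hk2ρ⟩ => h2ρ ?_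
      have hk : k ≠ 0 := by
        rintro rfl
        rw [znormd_zero] at hρk
        linarith
      linarith [one_le_znormd hk]
    simp [hempty]

lemma tsum_indicator_rpow_neg_le_of_dyadic_cover {S : Set (Fin d → ℤ)} {s c q : ℝ}
    (hs : 0 ≤ s) (hc : 0 < c) (hq : 0 < q) (hq' : q ^ ((d : ℝ) - s) < 1)
    (hS : ∀ k ∈ S, ∃ j : ℕ, k ∈ latticeShell d (c * q ^ j)) :
    ∑' k, S.indicator (fun k => ENNReal.ofReal (znormd d k ^ (-s))) k ≤
      ENNReal.ofReal (6 ^ d * c ^ ((d : ℝ) - s) / (1 - q ^ ((d : ℝ) - s))) := by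
  set f := fun k => ENNReal.ofReal (znormd d k ^ (-s))
  set r := q ^ ((d : ℝ) - s)
  have hr : 0 ≤ r := by positivity
  calc ∑' k, S.indicator f k
        ≤ ∑' k, ∑' j : ℕ, (latticeShell d (c * q ^ j)).indicator f k := by
        refine ENNReal.tsum_le_tsum fun k => ?_
        by_cases hk : k ∈ S
        · obtain ⟨j, hj⟩ := hS k hk
          rw [Set.indicator_of_mem hk, ← Set.indicator_of_mem hj f]
          exact ENNReal.le_tsum j
        · simp [Set.indicator_of_notMem hk]
    _ = ∑' j : ℕ, ∑' k, (latticeShell d (c * q ^ j)).indicator f k := ENNReal.tsum_comm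
    _ ≤ ∑' j : ℕ, ENNReal.ofReal (6 ^ d * c ^ ((d : ℝ) - s) * r ^ j) := by
        refine ENNReal.tsum_le_tsum fun j =>
          (tsum_indicator_latticeShell_le hs (by positivity)).trans_eq ?_
        rw [Real.mul_rpow hc.le (by positivity), ← Real.rpow_pow_comm hq.le, mul_assoc]
    _ = ENNReal.ofReal (∑' j : ℕ, 6 ^ d * c ^ ((d : ℝ) - s) * r ^ j) :=
        (ENNReal.ofReal_tsum_of_nonneg (fun j => by positivity)
          ((summable_geometric_of_lt_one hr hq').mul_left _)).symm
    _ = _ := by rw [tsum_mul_left, tsum_geometric_of_lt_one hr hq', div_eq_mul_inv]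

lemma exists_tsum_inside_ball_rpow_neg_le {s : ℝ} (hs : 0 ≤ s) (hsd : s < d) :
    ∃ C : ℝ≥0, ∀ R > 0,
      ∑' k, {k : Fin d → ℤ | k ≠ 0 ∧ znormd d k ≤ R}.indicator
        (fun k => ENNReal.ofReal (znormd d k ^ (-s))) k ≤
        C * ENNReal.ofReal (R ^ ((d : ℝ) - s)) := by
  have hq : (2⁻¹ : ℝ) ^ ((d : ℝ) - s) < 1 :=
    Real.rpow_lt_one (by norm_num) (by norm_num) (by linarith)
  refine ⟨((6 : ℝ) ^ d * 2⁻¹ ^ ((d : ℝ) - s) / (1 - 2⁻¹ ^ ((d : ℝ) - s))).toNNReal,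
    fun R hR => ?_⟩
  refine (tsum_indicator_rpow_neg_le_of_dyadic_cover hs (half_pos hR) (by norm_num) hq ?_).trans_eq
    ?_
  · rintro k ⟨hk0, hkR⟩
    have hk := znormd_pos hk0
    obtain ⟨j, hj, hj'⟩ := exists_nat_pow_near (one_le_div hk |>.mpr hkR) one_lt_two
    rw [le_div_iff₀ hk] at hj
    rw [div_lt_iff₀ hk, pow_succ] at hj'
    have hρ : R / 2 * 2⁻¹ ^ j * (2 ^ j * 2) = R := by
      rw [inv_pow]; field_simp
    have h2j : (0 : ℝ) < 2 ^ j := by positivity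
    refine ⟨j, ?_, ?_⟩
    · nlinarith
    · nlinarith
  · change ENNReal.ofReal _ = ENNReal.ofReal _ * _
    rw [← ENNReal.ofReal_mul (div_nonneg (by positivity) (by linarith))]
    congr 1
    rw [div_eq_mul_inv R, Real.mul_rpow hR.le (by norm_num)]
    ring

lemma exists_tsum_outside_ball_rpow_neg_le {t : ℝ} (hdt : d < t) :
    ∃ C : ℝ≥0, ∀ R > 0,
      ∑' k, {k : Fin d → ℤ | R < znormd d k}.indicator
        (fun k => ENNReal.ofReal (znormd d k ^ (-t))) k ≤
        C * ENNReal.ofReal (R ^ ((d : ℝ) - t)) := by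
  have hq : (2 : ℝ) ^ ((d : ℝ) - t) < 1 :=
    Real.rpow_lt_one_of_one_lt_of_neg one_lt_two (by linarith)
  refine ⟨((6 : ℝ) ^ d / (1 - 2 ^ ((d : ℝ) - t))).toNNReal, fun R hR => ?_⟩
  refine (tsum_indicator_rpow_neg_le_of_dyadic_cover ((Nat.cast_nonneg d).trans hdt.le) hR two_pos
    hq ?_).trans_eq ?_
  · intro k hk
    obtain ⟨j, hj, hj'⟩ := exists_nat_pow_near (one_le_div hR |>.mpr (le_of_lt hk)) one_lt_two
    rw [le_div_iff₀ hR] at hj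
    rw [div_lt_iff₀ hR, pow_succ] at hj'
    refine ⟨j, ?_, ?_⟩
    · linarith
    · linarith
  · change ENNReal.ofReal _ = ENNReal.ofReal _ * _
    rw [← ENNReal.ofReal_mul (div_nonneg (by positivity) (by linarith))]
    ring_nf

lemma one_div_rpow_mul_rpow_le {a b K l m : ℝ} (ha : 0 < a) (hb : 0 < b) (hl : 0 ≤ l)
    (hm : 0 ≤ m) (hK : K ≤ a + b) :
    1 / (a ^ l * b ^ m) ≤ a ^ (-l) * max a (K / 2) ^ (-m) + b ^ (-m) * max b (K / 2) ^ (-l) := by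
  wlog hab : a ≤ b generalizing a b l m
  · have := this hb ha hm hl (by linarith) (le_of_not_ge hab)
    rwa [mul_comm (b ^ m), add_comm] at this
  have hbmax : max a (K / 2) ≤ b := max_le hab (by linarith)
  calc 1 / (a ^ l * b ^ m) = a ^ (-l) * b ^ (-m) := by
        rw [Real.rpow_neg ha.le, Real.rpow_neg hb.le, one_div, mul_inv]
    _ ≤ a ^ (-l) * max a (K / 2) ^ (-m) := mul_le_mul_of_nonneg_left
        (Real.rpow_le_rpow_of_nonpos (lt_max_of_lt_left ha) hbmax (neg_nonpos.mpr hm))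
        (by positivity)
    _ ≤ _ := le_add_of_nonneg_right (by positivity)

def mixedWeight (d : ℕ) (l m R : ℝ) (k : Fin d → ℤ) : ℝ≥0∞ :=
  if k = 0 then 0 else ENNReal.ofReal (znormd d k ^ (-l) * max (znormd d k) R ^ (-m))

lemma mixedWeight_le (l m R : ℝ) (k : Fin d → ℤ) :
    mixedWeight d l m R k ≤
      {k : Fin d → ℤ | k ≠ 0 ∧ znormd d k ≤ R}.indicator
          (fun k => ENNReal.ofReal (znormd d k ^ (-l))) k * ENNReal.ofReal (R ^ (-m)) +
        {k : Fin d → ℤ | R < znormd d k}.indicator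
          (fun k => ENNReal.ofReal (znormd d k ^ (-(l + m)))) k := by
  unfold mixedWeight
  split_ifs with hk
  · exact zero_le
  have hk0 := znormd_pos hk
  by_cases hkR : znormd d k ≤ R
  · rw [Set.indicator_of_mem (show k ∈ {k | k ≠ 0 ∧ znormd d k ≤ R} from ⟨hk, hkR⟩),
      max_eq_right hkR, ← ENNReal.ofReal_mul (by positivity)]
    exact le_self_add
  · rw [not_le] at hkR
    rw [Set.indicator_of_mem (show k ∈ {k | R < znormd d k} from hkR), max_eq_left hkR.le,
      neg_add, Real.rpow_add hk0]
    exact le_add_self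

lemma exists_tsum_mixedWeight_le {l m : ℝ} (hl : 0 ≤ l) (hld : l < d) (hlm : d < l + m) :
    ∃ C : ℝ≥0, ∀ R > 0,
      ∑' k, mixedWeight d l m R k ≤ C * ENNReal.ofReal (R ^ ((d : ℝ) - (l + m))) := by
  obtain ⟨A, hA⟩ := exists_tsum_inside_ball_rpow_neg_le hl hld
  obtain ⟨B, hB⟩ := exists_tsum_outside_ball_rpow_neg_le hlm
  refine ⟨A + B, fun R hR => ?_⟩
  calc ∑' k, mixedWeight d l m R k
      ≤ (∑' k, {k : Fin d → ℤ | k ≠ 0 ∧ znormd d k ≤ R}.indicator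
            (fun k => ENNReal.ofReal (znormd d k ^ (-l))) k) * ENNReal.ofReal (R ^ (-m)) +
          ∑' k, {k : Fin d → ℤ | R < znormd d k}.indicator
            (fun k => ENNReal.ofReal (znormd d k ^ (-(l + m)))) k := by
        rw [← ENNReal.tsum_mul_right, ← ENNReal.tsum_add]
        exact ENNReal.tsum_le_tsum (mixedWeight_le l m R)
    _ ≤ A * ENNReal.ofReal (R ^ ((d : ℝ) - l)) * ENNReal.ofReal (R ^ (-m)) +
          B * ENNReal.ofReal (R ^ ((d : ℝ) - (l + m))) := by
        gcongr
        exacts [hA R hR, hB R hR]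
    _ = (A + B) * ENNReal.ofReal (R ^ ((d : ℝ) - (l + m))) := by
        rw [mul_assoc, ← ENNReal.ofReal_mul (by positivity), ← Real.rpow_add hR, add_mul]
        ring_nf

lemma ite_le_mixedWeight_add {l m : ℝ} (hl : 0 ≤ l) (hm : 0 ≤ m) (k k₁ : Fin d → ℤ) :
    (if k₁ ≠ 0 ∧ k₁ ≠ k then
        ENNReal.ofReal (1 / (znormd d k₁ ^ l * znormd d (k - k₁) ^ m)) else 0) ≤
      mixedWeight d l m (znormd d k / 2) k₁ + mixedWeight d m l (znormd d k / 2) (k - k₁) := by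
  split_ifs with h
  · obtain ⟨hk₁, hkk₁⟩ := h
    have hk₂ : k - k₁ ≠ 0 := sub_ne_zero.mpr hkk₁.symm
    have hsum : znormd d k ≤ znormd d k₁ + znormd d (k - k₁) := by
      simpa using znormd_add_le k₁ (k - k₁)
    rw [mixedWeight, mixedWeight, if_neg hk₁, if_neg hk₂]
    exact (ENNReal.ofReal_le_ofReal
      (one_div_rpow_mul_rpow_le (znormd_pos hk₁) (znormd_pos hk₂) hl hm hsum)).trans
      ENNReal.ofReal_add_le
  · exact zero_le

lemma ofReal_half_rpow_neg {K : ℝ} (hK : 0 < K) (e : ℝ) :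
    ENNReal.ofReal ((K / 2) ^ (-e)) = ENNReal.ofReal (2 ^ e) / ENNReal.ofReal (K ^ e) := by
  rw [← ENNReal.ofReal_div_of_pos (by positivity), Real.rpow_neg (by positivity),
    Real.div_rpow hK.le zero_le_two, inv_div]

end

/-- for `0 < l, m < d` with `l + m > d`, the convolution-type lattice sum
`∑_{k₁+k₂=k, k₁,k₂ ≠ 0} |k₁|^{-l} |k₂|^{-m}` is bounded by `C / |k|^{l+m-d}`. -/
theorem stmt0 (d : ℕ) (l m : ℝ) (hl0 : 0 < l) (hld : l < d) (hm0 : 0 < m) (hmd : m < d)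
    (hlm : (d : ℝ) < l + m) :
    ∃ C : ℝ≥0, ∀ k : Fin d → ℤ, k ≠ 0 →
      (∑' k₁ : Fin d → ℤ,
          if k₁ ≠ 0 ∧ k₁ ≠ k then
            ENNReal.ofReal (1 / (znormd d k₁ ^ l * znormd d (k - k₁) ^ m))
          else 0) ≤
        (C : ℝ≥0∞) / ENNReal.ofReal (znormd d k ^ (l + m - d)) := by
  obtain ⟨A, hA⟩ := exists_tsum_mixedWeight_le hl0.le hld hlm
  obtain ⟨B, hB⟩ := exists_tsum_mixedWeight_le hm0.le hmd (add_comm l m ▸ hlm)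
  refine ⟨Real.toNNReal (2 ^ (l + m - d)) * (A + B), fun k hk => ?_⟩
  set R := znormd d k / 2
  have hR : 0 < R := half_pos (znormd_pos hk)
  calc _ ≤ ∑' k₁, (mixedWeight d l m R k₁ + mixedWeight d m l R (k - k₁)) :=
        ENNReal.tsum_le_tsum (ite_le_mixedWeight_add hl0.le hm0.le k)
    _ = ∑' k₁, mixedWeight d l m R k₁ + ∑' k₂, mixedWeight d m l R k₂ := by
        rw [ENNReal.tsum_add]
        congr 1
        exact (Equiv.subLeft k).tsum_eq (mixedWeight d m l R)
    _ ≤ (A + B) * ENNReal.ofReal (R ^ ((d : ℝ) - (l + m))) := by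
        rw [add_mul]
        exact add_le_add (hA R hR) (add_comm m l ▸ hB R hR)
    _ = _ := by
        rw [show (d : ℝ) - (l + m) = -(l + m - d) by ring,
          ofReal_half_rpow_neg (znormd_pos hk), ENNReal.coe_mul, ENNReal.coe_add, ← mul_div_assoc,
          mul_comm]
        rfl

end
end

section
/- For any 0 < η < 1 and indices i, j, l ∈ {1,2,3}, there is a constant C (depending only on η) such that for all nonzero k₁, k₂ ∈ ℤ³ with k₁ + k₂ ≠ 0 and all 0 ≤ s < t: |e^{-|k₁+k₂|²(t−s)} (k₁+k₂)^i P̂^{jl}(k₁+k₂) − e^{-|k₂|²(t−s)} k₂^i P̂^{jl}(k₂)| ≤ C |k₁|^η (t−s)^{-(1−η)/2}. -/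
/-!
With `τ = t - s`, the symbol `g(ξ) = e^{-τ|ξ|²} ξ_i P̂^{jl}(ξ)` factors as `h(|ξ|) q(ξ/|ξ|)` with
the radial profile `h(r) = r e^{-τr²}` and the angular factor `q(u) = u_i (δ_{jl} - u_j u_l)`.
Since `|h| ≤ τ^{-1/2}` and `|q| ≤ 2` on the unit ball, `|g| ≤ 2τ^{-1/2}`. Since `h` is 1-Lipschitz
with `|h(r)| ≤ r`, `q` is 4-Lipschitz on the unit ball and `|w| |z/|z| - w/|w|| ≤ 2|z - w|`,
`g` is 10-Lipschitz on all of `ℝⁿ`. So the difference is at most `10 min(|k₁|, τ^{-1/2})`, and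
`min(a, b) ≤ a^η b^{1-η}` gives the claim with `C = 10`.
-/

noncomputable section

/-- Euclidean norm of a lattice point in `ℤ³`. -/
def znorm3 (k : Fin 3 → ℤ) : ℝ := Real.sqrt (∑ i, ((k i : ℝ))^2)

/-- Fourier multiplier of the Leray projection: `P̂^{jl}(k) = δ_{jl} − k^j k^l/|k|²`. -/
def PhatZ (a b : Fin 3) (k : Fin 3 → ℤ) : ℝ :=
  (if a = b then 1 else 0) - (k a : ℝ) * (k b : ℝ) / (znorm3 k)^2

open Real

lemma le_mul_rpow_mul_rpow_of_le_mul {x a b C η : ℝ} (hx : 0 ≤ x) (ha : 0 ≤ a) (hb : 0 ≤ b)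
    (hC : 0 ≤ C) (hη0 : 0 ≤ η) (hη1 : η ≤ 1) (hxa : x ≤ C * a) (hxb : x ≤ C * b) :
    x ≤ C * a ^ η * b ^ (1 - η) := by
  have hsplit : ∀ y : ℝ, 0 ≤ y → y ^ η * y ^ (1 - η) = y := fun y hy => by
    rw [← rpow_add' hy (by norm_num), add_sub_cancel, rpow_one]
  calc x = x ^ η * x ^ (1 - η) := (hsplit x hx).symm
    _ ≤ (C * a) ^ η * (C * b) ^ (1 - η) := by gcongr
    _ = C * a ^ η * b ^ (1 - η) := by
        rw [mul_rpow hC ha, mul_rpow hC hb]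
        linear_combination (a ^ η * b ^ (1 - η)) * hsplit C hC

lemma abs_mulExpNegMulSq_le_abs {τ : ℝ} (hτ : 0 ≤ τ) (x : ℝ) : |mulExpNegMulSq τ x| ≤ |x| := by
  rw [mulExpNegSq_apply, abs_mul, abs_exp]
  exact mul_le_of_le_one_right (abs_nonneg x)
    (exp_le_one_iff.2 (by nlinarith [mul_self_nonneg x]))

section Normalize

variable {V : Type*} [NormedAddCommGroup V] [NormedSpace ℝ V]

lemma norm_normalize_le_one (z : V) : ‖NormedSpace.normalize z‖ ≤ 1 := by
  rcases eq_or_ne z 0 with rfl | hz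
  · simp [NormedSpace.normalize_zero_eq_zero]
  · exact (NormedSpace.norm_normalize hz).le

lemma norm_mul_norm_normalize_sub_normalize_le (z w : V) :
    ‖w‖ * ‖NormedSpace.normalize z - NormedSpace.normalize w‖ ≤ 2 * ‖z - w‖ := by
  have key : ‖w‖ • (NormedSpace.normalize z - NormedSpace.normalize w)
      = (‖w‖ - ‖z‖) • NormedSpace.normalize z + (z - w) := by
    rw [smul_sub, sub_smul, NormedSpace.norm_smul_normalize, NormedSpace.norm_smul_normalize]
    abel
  calc ‖w‖ * ‖NormedSpace.normalize z - NormedSpace.normalize w‖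
      = ‖(‖w‖ - ‖z‖) • NormedSpace.normalize z + (z - w)‖ := by
        rw [← key, norm_smul, norm_norm]
    _ ≤ |‖w‖ - ‖z‖| * 1 + ‖z - w‖ := by
        grw [norm_add_le, norm_smul, Real.norm_eq_abs, norm_normalize_le_one]
    _ ≤ 2 * ‖z - w‖ := by
        grw [abs_norm_sub_norm_le, norm_sub_rev w z]; linarith

end Normalize

lemma abs_ite_one_zero_sub_mul_le (p : Prop) [Decidable p] {a b : ℝ} (ha : |a| ≤ 1)
    (hb : |b| ≤ 1) : |(if p then (1 : ℝ) else 0) - a * b| ≤ 2 := by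
  have hδ : |(if p then (1 : ℝ) else 0)| ≤ 1 := by split_ifs <;> simp
  have hab : |a * b| ≤ 1 := by rw [abs_mul]; nlinarith [abs_nonneg a, abs_nonneg b]
  exact (abs_sub _ _).trans (by linarith)

section LeraySymbol

variable {ι : Type*} [Fintype ι]

lemma abs_apply_le_norm (x : EuclideanSpace ℝ ι) (i : ι) : |x i| ≤ ‖x‖ :=
  PiLp.norm_apply_le x i

variable [DecidableEq ι]

def lerayMultiplier (j l : ι) (x : EuclideanSpace ℝ ι) : ℝ :=
  (if j = l then 1 else 0) - x j * x l / ‖x‖ ^ 2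

def heatLeraySymbol (τ : ℝ) (i j l : ι) (x : EuclideanSpace ℝ ι) : ℝ :=
  exp (-(‖x‖ ^ 2 * τ)) * x i * lerayMultiplier j l x

def lerayUnitSymbol (i j l : ι) (u : EuclideanSpace ℝ ι) : ℝ :=
  u i * ((if j = l then 1 else 0) - u j * u l)

lemma heatLeraySymbol_eq (τ : ℝ) (i j l : ι) (x : EuclideanSpace ℝ ι) :
    heatLeraySymbol τ i j l x
      = mulExpNegMulSq τ ‖x‖ * lerayUnitSymbol i j l (NormedSpace.normalize x) := by
  rcases eq_or_ne x 0 with rfl | hx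
  · simp [heatLeraySymbol, mulExpNegMulSq]
  simp only [heatLeraySymbol, lerayMultiplier, lerayUnitSymbol, mulExpNegMulSq,
    NormedSpace.normalize, PiLp.smul_apply, smul_eq_mul]
  field_simp

lemma abs_lerayUnitSymbol_le {u : EuclideanSpace ℝ ι} (hu : ‖u‖ ≤ 1) (i j l : ι) :
    |lerayUnitSymbol i j l u| ≤ 2 := by
  have hi := (abs_apply_le_norm u i).trans hu
  rw [lerayUnitSymbol, abs_mul]
  nlinarith [abs_ite_one_zero_sub_mul_le (j = l) ((abs_apply_le_norm u j).trans hu)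
    ((abs_apply_le_norm u l).trans hu), abs_nonneg (u i)]

lemma abs_lerayUnitSymbol_sub_le {u v : EuclideanSpace ℝ ι} (hu : ‖u‖ ≤ 1) (hv : ‖v‖ ≤ 1)
    (i j l : ι) : |lerayUnitSymbol i j l u - lerayUnitSymbol i j l v| ≤ 4 * ‖u - v‖ := by
  have hcoord : ∀ m, |u m - v m| ≤ ‖u - v‖ := fun m => abs_apply_le_norm (u - v) m
  have hu' : ∀ m, |u m| ≤ 1 := fun m => (abs_apply_le_norm u m).trans hu
  have hv' : ∀ m, |v m| ≤ 1 := fun m => (abs_apply_le_norm v m).trans hv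
  have hprod : |v j * v l - u j * u l| ≤ 2 * ‖u - v‖ := by
    have hsplit : v j * v l - u j * u l = (v j - u j) * v l + u j * (v l - u l) := by ring
    rw [hsplit]
    have hj := hcoord j
    have hl := hcoord l
    rw [abs_sub_comm] at hj hl
    calc |(v j - u j) * v l + u j * (v l - u l)|
        ≤ |v j - u j| * |v l| + |u j| * |v l - u l| := by
          grw [abs_add_le, abs_mul, abs_mul]
      _ ≤ ‖u - v‖ * 1 + 1 * ‖u - v‖ := by
          gcongr
          exacts [hv' l, hu' j]
      _ = 2 * ‖u - v‖ := by ring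
  have hsplit : lerayUnitSymbol i j l u - lerayUnitSymbol i j l v
      = (u i - v i) * ((if j = l then 1 else 0) - u j * u l)
        + v i * (v j * v l - u j * u l) := by
    simp only [lerayUnitSymbol]; ring
  rw [hsplit]
  calc |(u i - v i) * ((if j = l then 1 else 0) - u j * u l)
        + v i * (v j * v l - u j * u l)|
      ≤ |u i - v i| * |(if j = l then 1 else 0) - u j * u l|
        + |v i| * |v j * v l - u j * u l| := by
        grw [abs_add_le, abs_mul, abs_mul]
    _ ≤ ‖u - v‖ * 2 + 1 * (2 * ‖u - v‖) := by
        gcongr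
        exacts [hcoord i, abs_ite_one_zero_sub_mul_le (j = l) (hu' j) (hu' l), hv' i]
    _ = 4 * ‖u - v‖ := by ring

variable {τ : ℝ}

lemma abs_heatLeraySymbol_le (hτ : 0 < τ) (i j l : ι) (x : EuclideanSpace ℝ ι) :
    |heatLeraySymbol τ i j l x| ≤ 2 * (√τ)⁻¹ := by
  rw [heatLeraySymbol_eq, abs_mul, mul_comm 2]
  exact mul_le_mul (abs_mulExpNegMulSq_le hτ)
    (abs_lerayUnitSymbol_le (norm_normalize_le_one x) ..) (abs_nonneg _) (by positivity)

lemma abs_heatLeraySymbol_sub_le (hτ : 0 < τ) (i j l : ι) (z w : EuclideanSpace ℝ ι) :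
    |heatLeraySymbol τ i j l z - heatLeraySymbol τ i j l w| ≤ 10 * ‖z - w‖ := by
  set u := NormedSpace.normalize z
  set v := NormedSpace.normalize w
  have hrad : |mulExpNegMulSq τ ‖z‖ - mulExpNegMulSq τ ‖w‖| ≤ ‖z - w‖ :=
    (dist_mulExpNegMulSq_le_dist hτ).trans (abs_norm_sub_norm_le z w)
  have hw : |mulExpNegMulSq τ ‖w‖| ≤ ‖w‖ := by
    simpa using abs_mulExpNegMulSq_le_abs hτ.le ‖w‖
  have hang :=
    abs_lerayUnitSymbol_sub_le (norm_normalize_le_one z) (norm_normalize_le_one w) i j l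
  have hnormalize := norm_mul_norm_normalize_sub_normalize_le z w
  rw [heatLeraySymbol_eq, heatLeraySymbol_eq]
  calc |mulExpNegMulSq τ ‖z‖ * lerayUnitSymbol i j l u
        - mulExpNegMulSq τ ‖w‖ * lerayUnitSymbol i j l v|
      = |(mulExpNegMulSq τ ‖z‖ - mulExpNegMulSq τ ‖w‖) * lerayUnitSymbol i j l u
          + mulExpNegMulSq τ ‖w‖ * (lerayUnitSymbol i j l u - lerayUnitSymbol i j l v)| := by
        ring_nf
    _ ≤ ‖z - w‖ * 2 + ‖w‖ * (4 * ‖u - v‖) := by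
        grw [abs_add_le, abs_mul, abs_mul, hrad, hw, hang,
          abs_lerayUnitSymbol_le (norm_normalize_le_one z)]
    _ ≤ 10 * ‖z - w‖ := by linarith

lemma abs_heatLeraySymbol_sub_le_rpow (hτ : 0 < τ) {η : ℝ} (hη0 : 0 ≤ η) (hη1 : η ≤ 1)
    (i j l : ι) (z w : EuclideanSpace ℝ ι) :
    |heatLeraySymbol τ i j l z - heatLeraySymbol τ i j l w|
      ≤ 10 * ‖z - w‖ ^ η * τ ^ (-((1 - η) / 2)) := by
  have hsup : |heatLeraySymbol τ i j l z - heatLeraySymbol τ i j l w| ≤ 10 * (√τ)⁻¹ := by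
    have := (abs_sub _ _).trans (add_le_add (abs_heatLeraySymbol_le hτ i j l z)
      (abs_heatLeraySymbol_le hτ i j l w))
    linarith [inv_nonneg.2 (sqrt_nonneg τ)]
  have h := le_mul_rpow_mul_rpow_of_le_mul (abs_nonneg _) (norm_nonneg _) (by positivity)
    (by norm_num) hη0 hη1 (abs_heatLeraySymbol_sub_le hτ i j l z w) hsup
  rwa [sqrt_eq_rpow, ← rpow_neg hτ.le, ← rpow_mul hτ.le, neg_mul, one_div_mul_eq_div] at h

end LeraySymbol

def latticeVec {ι : Type*} (k : ι → ℤ) : EuclideanSpace ℝ ι := WithLp.toLp 2 fun i => (k i : ℝ)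

@[simp]
lemma latticeVec_apply {ι : Type*} (k : ι → ℤ) (i : ι) : latticeVec k i = k i := rfl

lemma latticeVec_add {ι : Type*} (k₁ k₂ : ι → ℤ) :
    latticeVec (k₁ + k₂) = latticeVec k₁ + latticeVec k₂ := by
  ext i; simp

lemma znorm3_eq_norm_latticeVec (k : Fin 3 → ℤ) : znorm3 k = ‖latticeVec k‖ := by
  simp [znorm3, EuclideanSpace.norm_eq]

lemma heatLeraySymbol_latticeVec (τ : ℝ) (i j l : Fin 3) (k : Fin 3 → ℤ) :
    heatLeraySymbol τ i j l (latticeVec k)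
      = exp (-((znorm3 k) ^ 2 * τ)) * (k i : ℝ) * PhatZ j l k := by
  simp [heatLeraySymbol, lerayMultiplier, PhatZ, znorm3_eq_norm_latticeVec]

/-- for `0 < η < 1` one has
`|e^{-|k₁₂|²(t−s)} k₁₂^i P̂^{jl}(k₁₂) − e^{-|k₂|²(t−s)} k₂^i P̂^{jl}(k₂)|
  ≤ C |k₁|^η (t−s)^{-(1−η)/2}`. -/
theorem stmt1 (η : ℝ) (hη0 : 0 < η) (hη1 : η < 1) (i j l : Fin 3) :
    ∃ C : ℝ, ∀ k₁ k₂ : Fin 3 → ℤ, k₁ ≠ 0 → k₂ ≠ 0 → k₁ + k₂ ≠ 0 →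
      ∀ s t : ℝ, 0 ≤ s → s < t →
      |Real.exp (-((znorm3 (k₁ + k₂))^2 * (t - s))) * (((k₁ + k₂) i : ℤ) : ℝ) * PhatZ j l (k₁ + k₂)
          - Real.exp (-((znorm3 k₂)^2 * (t - s))) * ((k₂ i : ℤ) : ℝ) * PhatZ j l k₂| ≤
        C * znorm3 k₁ ^ η * (t - s) ^ (-((1 - η) / 2)) := by
  refine ⟨10, fun k₁ k₂ _ _ _ s t _ hst => ?_⟩
  have h := abs_heatLeraySymbol_sub_le_rpow (sub_pos.2 hst) hη0.le hη1.le i j l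
    (latticeVec (k₁ + k₂)) (latticeVec k₂)
  rwa [heatLeraySymbol_latticeVec, heatLeraySymbol_latticeVec, latticeVec_add,
    add_sub_cancel_right, ← znorm3_eq_norm_latticeVec] at h

end
end
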